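/- Suppose the shortest s–v path in the weighted disk graph G contains an irregular edge uv, where u ≠ s is the predecessor of v in the shortest path tree T. Then |uv| ≥ r_v/2, unless r_u > r_v and v is a leaf of T. -/

import Mathlib

noncomputable section

/-- Points of the plane. -/
abbrev Pt := EuclideanSpace ℝ (Fin 2)

/-- Membership in the closed axis-parallel square of Euclidean diameter `d`
(side `d/√2`) centered at `p`. -/
def inSq (p : Pt) (d : ℝ) (x : Pt) : Prop :=
  ∀ i, |x i - p i| ≤ d / (2 * Real.sqrt 2)

/-- Adjacency in the weighted disk graph: distinct points whose disks intersect. -/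
def Adj (r : Pt → ℝ) (x y : Pt) : Prop := x ≠ y ∧ dist x y ≤ r x + r y

/-- A (simple) path from `s` to `v` in the weighted disk graph on `P`. -/
def IsPath (P : Set Pt) (r : Pt → ℝ) (s v : Pt) (L : List Pt) : Prop :=
  L.head? = some s ∧ L.getLast? = some v ∧ (∀ x ∈ L, x ∈ P) ∧ L.Nodup ∧ L.Chain' (Adj r)

/-- The length of a path: the sum of the Euclidean lengths of its edges. -/
def pathLen : List Pt → ℝ
  | [] => 0
  | [_] => 0
  | a :: b :: L => dist a b + pathLen (b :: L)

/-- Shortest-path distance from `s` to `v` in the weighted disk graph on `P`. -/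
def spDist (P : Set Pt) (r : Pt → ℝ) (s v : Pt) : ℝ :=
  sInf (pathLen '' {L | IsPath P r s v L})

/-! If `a → b → c` are consecutive edges of shortest paths, the disks of `a` and `c` are
disjoint: otherwise `ac` is an edge with `d(a) + |ac| ≤ d(c)`, so `c` would have a second
shortest path, ending in `ac`. When `2 r_u ≤ r_v`, apply this to `prv u → u → v`; when
`2 r_v ≤ r_u`, to `u → v → x` for a child `x` of `v`. In both cases the triangle inequality
through the middle vertex forces `|uv|` to be large. -/

lemma pathLen_nonneg : ∀ L : List Pt, 0 ≤ pathLen L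
  | [] | [_] => le_rfl
  | _ :: b :: L => add_nonneg dist_nonneg (pathLen_nonneg (b :: L))

lemma pathLen_append_cons (A : List Pt) (y : Pt) (B : List Pt) :
    pathLen (A ++ y :: B) = pathLen (A ++ [y]) + pathLen (y :: B) := by
  induction A with
  | nil => simp [pathLen]
  | cons a A ih =>
      match A with
      | [] => simp [pathLen]
      | b :: A' =>
          simp only [List.cons_append, pathLen] at ih ⊢
          rw [ih, add_assoc]

lemma pathLen_append_singleton {L : List Pt} {e : Pt} (h : L.getLast? = some e) (y : Pt) :
    pathLen (L ++ [y]) = pathLen L + dist e y := by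
  induction L with
  | nil => simp at h
  | cons a L ih =>
      match L with
      | [] =>
          obtain rfl : a = e := by simpa using h
          simp [pathLen]
      | b :: L' =>
          rw [List.getLast?_cons_cons] at h
          simp only [List.cons_append, pathLen] at ih ⊢
          rw [ih h, add_assoc]

section ShortestPaths

variable {P : Set Pt} {r : Pt → ℝ} {s : Pt}

lemma spDist_le_pathLen {y : Pt} {L : List Pt} (h : IsPath P r s y L) :
    spDist P r s y ≤ pathLen L :=
  csInf_le ⟨0, by rintro _ ⟨M, -, rfl⟩; exact pathLen_nonneg M⟩ ⟨L, h, rfl⟩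

lemma IsPath.spDist_le_pathLen_of_mem {e y : Pt} {L : List Pt} (h : IsPath P r s e L)
    (hy : y ∈ L) : spDist P r s y ≤ pathLen L := by
  obtain ⟨A, B, rfl⟩ := List.append_of_mem hy
  obtain ⟨hhead, -, hmem, hnodup, hchain⟩ := h
  have hpre : A ++ [y] <+: A ++ y :: B := ⟨B, by simp⟩
  have hpath : IsPath P r s y (A ++ [y]) := by
    refine ⟨?_, by simp, fun x hx => hmem x (hpre.sublist.mem hx),
      hnodup.sublist hpre.sublist, hchain.prefix hpre⟩
    cases A <;> simpa using hhead
  calc spDist P r s y ≤ pathLen (A ++ [y]) := spDist_le_pathLen hpath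
    _ ≤ pathLen (A ++ [y]) + pathLen (y :: B) := le_add_of_nonneg_right (pathLen_nonneg _)
    _ = pathLen (A ++ y :: B) := (pathLen_append_cons A y B).symm

lemma IsPath.append_singleton {e y : Pt} {L : List Pt} (h : IsPath P r s e L) (hyP : y ∈ P)
    (hyL : y ∉ L) (hey : Adj r e y) : IsPath P r s y (L ++ [y]) := by
  obtain ⟨hhead, hlast, hmem, hnodup, hchain⟩ := h
  refine ⟨?_, by simp, ?_, ?_, ?_⟩
  · cases L with
    | nil => simp at hhead
    | cons a L' => simpa using hhead
  · simpa [or_imp, forall_and] using ⟨hmem, hyP⟩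
  · exact List.nodup_append.2 ⟨hnodup, List.nodup_singleton y, by
      intro x hx b hb
      rw [List.mem_singleton.1 hb]
      exact fun hxy => hyL (hxy ▸ hx)⟩
  · refine List.isChain_append.2 ⟨hchain, List.isChain_singleton y, ?_⟩
    intro x hx z hz
    obtain rfl : e = x := by simpa [hlast] using hx
    obtain rfl : y = z := by simpa using hz
    exact hey

lemma IsPath.append_singleton_shortest {e y : Pt} {L : List Pt} (hL : IsPath P r s e L)
    (hlen : pathLen L = spDist P r s e) (hyP : y ∈ P) (hey : Adj r e y)
    (hd : spDist P r s e + dist e y ≤ spDist P r s y) :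
    IsPath P r s y (L ++ [y]) ∧ pathLen (L ++ [y]) = spDist P r s y := by
  have hpos : 0 < dist e y := dist_pos.2 hey.1
  have hyL : y ∉ L := fun hy => by
    linarith [hL.spDist_le_pathLen_of_mem hy]
  have hpath := hL.append_singleton hyP hyL hey
  refine ⟨hpath, le_antisymm ?_ (spDist_le_pathLen hpath)⟩
  rw [pathLen_append_singleton hL.2.1, hlen]
  exact hd

lemma eq_of_spDist_add_dist_le
    (huniq : ∀ v ∈ P, ∃! L, IsPath P r s v L ∧ pathLen L = spDist P r s v)
    {a b y : Pt} (ha : a ∈ P) (hb : b ∈ P) (hy : y ∈ P) (hay : Adj r a y) (hby : Adj r b y)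
    (hda : spDist P r s a + dist a y ≤ spDist P r s y)
    (hdb : spDist P r s b + dist b y ≤ spDist P r s y) : a = b := by
  obtain ⟨La, ⟨hLa, hLalen⟩, -⟩ := huniq a ha
  obtain ⟨Lb, ⟨hLb, hLblen⟩, -⟩ := huniq b hb
  have hLaeq : La = Lb :=
    List.append_cancel_right ((huniq y hy).unique
      (hLa.append_singleton_shortest hLalen hy hay hda)
      (hLb.append_singleton_shortest hLblen hy hby hdb))
  simpa [hLaeq, hLb.2.1] using hLa.2.1.symm

lemma add_lt_dist_of_shortest_path_edges
    (huniq : ∀ v ∈ P, ∃! L, IsPath P r s v L ∧ pathLen L = spDist P r s v)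
    {a b c : Pt} (ha : a ∈ P) (hb : b ∈ P) (hc : c ∈ P) (hab : Adj r a b) (hbc : Adj r b c)
    (hdb : spDist P r s a + dist a b ≤ spDist P r s b)
    (hdc : spDist P r s b + dist b c ≤ spDist P r s c) :
    r a + r c < dist a c := by
  by_contra! hac
  have hpos : 0 < dist a b := dist_pos.2 hab.1
  have htri := dist_triangle a b c
  have hdac : spDist P r s a + dist a c ≤ spDist P r s c := by linarith
  have hne : a ≠ c := by
    rintro rfl
    linarith [dist_nonneg (x := b) (y := a)]
  exact hab.1 (eq_of_spDist_add_dist_le huniq ha hb hc ⟨hne, hac⟩ hbc hdac hdc)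

end ShortestPaths

theorem irregular_predecessor_edge_long_general
    (P : Set Pt) (r : Pt → ℝ)
    (s : Pt)
    (huniq : ∀ v ∈ P, ∃! L, IsPath P r s v L ∧ pathLen L = spDist P r s v)
    (prv : Pt → Pt)
    (hprv : ∀ v ∈ P, v ≠ s → prv v ∈ P ∧ Adj r (prv v) v ∧
      spDist P r s v = spDist P r s (prv v) + dist (prv v) v)
    (v : Pt) (hv : v ∈ P) (hvs : v ≠ s) (hus : prv v ≠ s)
    (hirr : 2 * min (r (prv v)) (r v) ≤ max (r (prv v)) (r v))
    (hnot : ¬ (r v < r (prv v) ∧ ¬ ∃ x ∈ P, x ≠ s ∧ prv x = v)) :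
    r v / 2 ≤ dist (prv v) v := by
  obtain ⟨huP, huv, hdv⟩ := hprv v hv hvs
  rcases le_or_gt (r (prv v)) (r v) with hle | hlt
  · rw [min_eq_left hle, max_eq_right hle] at hirr
    obtain ⟨hwP, hwu, hdu⟩ := hprv (prv v) huP hus
    have hfar := add_lt_dist_of_shortest_path_edges huniq hwP huP hv hwu huv hdu.ge hdv.ge
    linarith [dist_triangle (prv (prv v)) (prv v) v, hwu.2]
  · rw [min_eq_right hlt.le, max_eq_left hlt.le] at hirr
    obtain ⟨x, hxP, hxs, hxv⟩ : ∃ x ∈ P, x ≠ s ∧ prv x = v := by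
      by_contra h
      exact hnot ⟨hlt, h⟩
    obtain ⟨-, hvx, hdx⟩ := hprv x hxP hxs
    rw [hxv] at hvx hdx
    have hfar := add_lt_dist_of_shortest_path_edges huniq huP hv hxP huv hvx hdv.ge hdx.ge
    linarith [dist_triangle (prv v) v x, hvx.2, dist_nonneg (x := prv v) (y := v)]

/-- Assume every vertex of `P` is connected to `s` and shortest paths
from `s` are unique, and let `prv` be the predecessor function of the resulting shortest
path tree `T` rooted at `s`. Suppose the shortest `s`–`v` path contains an irregular edge
`uv` where `u = prv v ≠ s` (irregular: `2·min(r u, r v) ≤ max(r u, r v)`). Then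
`|uv| ≥ r v / 2`, unless `r u > r v` and `v` is a leaf of `T`. -/
theorem irregular_predecessor_edge_long
    (P : Set Pt) (r : Pt → ℝ) (hr : ∀ p ∈ P, 1 ≤ r p)
    (s : Pt) (hs : s ∈ P)
    (hconn : ∀ v ∈ P, ∃ L, IsPath P r s v L)
    (huniq : ∀ v ∈ P, ∃! L, IsPath P r s v L ∧ pathLen L = spDist P r s v)
    (prv : Pt → Pt)
    (hprv : ∀ v ∈ P, v ≠ s → prv v ∈ P ∧ Adj r (prv v) v ∧
      spDist P r s v = spDist P r s (prv v) + dist (prv v) v)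
    (v : Pt) (hv : v ∈ P) (hvs : v ≠ s) (hus : prv v ≠ s)
    (hirr : 2 * min (r (prv v)) (r v) ≤ max (r (prv v)) (r v))
    (hnot : ¬ (r v < r (prv v) ∧ ¬ ∃ x ∈ P, x ≠ s ∧ prv x = v)) :
    r v / 2 ≤ dist (prv v) v :=
  irregular_predecessor_edge_long_general P r s huniq prv hprv v hv hvs hus hirr hnot
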